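/- Let f : X → X be a pointwise periodic homeomorphism of a compact metric space. If B ∈ 2^X is a periodic point of the induced map 2^f (f^N(B) = B for some N ≥ 1) and A ∈ 2^X is proximal to B under 2^f, then A = B. In other words, the proximal cell of any periodic point of 2^f is a singleton. -/

import Mathlib

open TopologicalSpace Metric Set Filter

/-- The induced map on the hyperspace of nonempty compact (= closed) subsets. -/
noncomputable def hyper {X : Type*} [MetricSpace X] (f : X ≃ₜ X) :
    NonemptyCompacts X → NonemptyCompacts X :=
  fun A => ⟨⟨f '' A, A.isCompact.image f.continuous⟩, A.nonempty.image f⟩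

/-- `x` is uniformly recurrent for `g`. -/
def IsUnifRec {α : Type*} [MetricSpace α] (g : α → α) (x : α) : Prop :=
  ∀ ε > (0:ℝ), ∃ N > 0, ∀ k : ℕ, dist (g^[k * N] x) x < ε

/-- `x` is recurrent for `g` (it belongs to its own ω-limit set). -/
def IsRec {α : Type*} [MetricSpace α] (g : α → α) (x : α) : Prop :=
  ∀ ε > (0:ℝ), ∀ m : ℕ, ∃ n ≥ m, 0 < n ∧ dist (g^[n] x) x < ε

/-- `x` is almost periodic for `g`. -/
def IsAP {α : Type*} [MetricSpace α] (g : α → α) (x : α) : Prop :=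
  ∀ ε > (0:ℝ), ∃ N : ℕ, ∀ n : ℕ, ∃ i < N, dist (g^[n + i] x) x < ε

/-- `(x, y)` is an asymptotic pair for `g`. -/
def Asymp {α : Type*} [MetricSpace α] (g : α → α) (x y : α) : Prop :=
  Filter.Tendsto (fun n => dist (g^[n] x) (g^[n] y)) Filter.atTop (nhds 0)

/-- `(x, y)` is a proximal pair for `g`. -/
def Proximal {α : Type*} [MetricSpace α] (g : α → α) (x y : α) : Prop :=
  ∀ ε > (0:ℝ), ∀ m : ℕ, ∃ n ≥ m, dist (g^[n] x) (g^[n] y) < ε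

/-- The ω-limit set of `x` under `g`. -/
def omegaSet {α : Type*} [MetricSpace α] (g : α → α) (x : α) : Set α :=
  {y | ∀ ε > (0:ℝ), ∀ m : ℕ, ∃ n ≥ m, dist (g^[n] x) y < ε}

/-- `M` is a minimal set of `g`. -/
def IsMinimalFor {α : Type*} [TopologicalSpace α] (g : α → α) (M : Set α) : Prop :=
  M.Nonempty ∧ IsClosed M ∧ Set.MapsTo g M M ∧
    ∀ M' ⊆ M, M'.Nonempty → IsClosed M' → Set.MapsTo g M' M' → M' = M

/-- `A` is internally chain transitive for `g`. -/
def ICT {α : Type*} [MetricSpace α] (g : α → α) (A : Set α) : Prop :=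
  ∀ a ∈ A, ∀ b ∈ A, ∀ ε > (0:ℝ), ∃ N : ℕ, 1 ≤ N ∧ ∃ c : ℕ → α,
    c 0 = a ∧ c N = b ∧ (∀ i ≤ N, c i ∈ A) ∧ ∀ i < N, dist (g (c i)) (c (i + 1)) < ε

/-!
Since `2^f` is uniformly continuous and `(2^f)^N` fixes `B`, proximal times can be pushed to
multiples of any `pN`: for every `p > 0`, `f^n(A)` comes arbitrarily close to `B` along times `n`
divisible by `p` with `f^n(B) = B`. A point `a ∈ A` of period `p` lies in all those `f^n(A)`,
hence `a ∈ B`. Conversely, by Baire's theorem the points of `B` having a neighbourhood in `B` of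
common period `q` are dense in `B`; near such a point `x` the set `f^n(A) ⊆ B` (with `q ∣ n`)
contains points fixed by `f^n`, which by injectivity lie in `A`, so `x ∈ closure A = A`.
-/

open Function

section Proximal

variable {α : Type*} [MetricSpace α] {g : α → α}

lemma UniformContinuous.exists_forall_le_dist_iterate_lt (hg : UniformContinuous g) (Q : ℕ)
    {ε : ℝ} (hε : 0 < ε) :
    ∃ δ > 0, ∀ ⦃x y : α⦄, dist x y < δ → ∀ t ≤ Q, dist (g^[t] x) (g^[t] y) < ε := by
  have : ∀ᶠ p : α × α in uniformity α, ∀ t ∈ Iic Q, dist (g^[t] p.1) (g^[t] p.2) < ε :=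
    (eventually_all_finite (finite_Iic Q)).2 fun t _ => hg.iterate g t (dist_mem_uniformity hε)
  obtain ⟨δ, hδ, h⟩ := mem_uniformity_dist.1 this
  exact ⟨δ, hδ, fun x y hxy => h hxy⟩

lemma Proximal.iterate (hg : UniformContinuous g) {x y : α} (h : Proximal g x y) {M : ℕ}
    (hM : 0 < M) : Proximal g^[M] x y := by
  intro ε hε m
  obtain ⟨δ, hδ, hδε⟩ := hg.exists_forall_le_dist_iterate_lt M hε
  obtain ⟨n, hn, hxy⟩ := h δ hδ (M * m)
  have hle : M * (n / M) ≤ n := Nat.mul_div_le n M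
  have hlt : n < M * (n / M + 1) := Nat.lt_mul_div_succ n hM
  refine ⟨n / M + 1, ?_, ?_⟩
  · have : m ≤ n / M := (Nat.le_div_iff_mul_le hM).2 (by rw [mul_comm]; exact hn)
    omega
  rw [← iterate_mul, ← Nat.sub_add_cancel hlt.le, iterate_add_apply,
    iterate_add_apply]
  exact hδε hxy _ (by rw [mul_add] at hlt ⊢; omega)

lemma Proximal.exists_dist_iterate_mul_lt (hg : UniformContinuous g) {x y : α}
    (h : Proximal g x y) {M : ℕ} (hM : 0 < M) (hy : g^[M] y = y) {ε : ℝ} (hε : 0 < ε) :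
    ∃ n, dist (g^[M * n] x) y < ε := by
  obtain ⟨n, -, hn⟩ := h.iterate hg hM ε hε 0
  exact ⟨n, by rwa [iterate_fixed hy, ← iterate_mul] at hn⟩

end Proximal

lemma IsCompact.subset_closure_setOf_locally_periodic {X : Type*} [MetricSpace X] {K : Set X}
    (hK : IsCompact K) {g : X → X} (hg : Continuous g) (hper : ∀ x ∈ K, ∃ n > 0, g^[n] x = x) :
    K ⊆ closure {x ∈ K | ∃ q > 0, ∃ r > 0, ∀ y ∈ K, dist y x < r → g^[q] y = y} := by
  have := isCompact_iff_compactSpace.mp hK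
  let P : ℕ → Set K := fun q => {x | g^[q + 1] x = x}
  have hPc : ∀ q, IsClosed (P q) := fun q =>
    isClosed_eq ((hg.iterate _).comp continuous_subtype_val) continuous_subtype_val
  have hPu : ⋃ q, P q = univ := eq_univ_of_forall fun x => by
    obtain ⟨n, hn, hx⟩ := hper x x.2
    exact mem_iUnion.2 ⟨n - 1, show g^[n - 1 + 1] x = x by rwa [Nat.sub_add_cancel hn]⟩
  intro x hx
  have hxcl := closure_subtype.1
    ((dense_iUnion_interior_of_closed hPc hPu).closure_eq.symm ▸ mem_univ (⟨x, hx⟩ : K))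
  refine closure_mono ?_ hxcl
  rintro _ ⟨z, hz, rfl⟩
  obtain ⟨q, hq⟩ := mem_iUnion.1 hz
  obtain ⟨r, hr, hball⟩ := Metric.mem_nhds_iff.1 (mem_interior_iff_mem_nhds.1 hq)
  exact ⟨z.2, q + 1, q.succ_pos, r, hr, fun y hy hyz => hball (show ⟨y, hy⟩ ∈ _ from hyz)⟩

section Hyperspace

variable {X : Type*} [MetricSpace X] (f : X ≃ₜ X)

lemma coe_hyper_iterate (n : ℕ) (A : NonemptyCompacts X) :
    ((hyper f)^[n] A : Set X) = f^[n] '' A := by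
  rw [image_iterate_eq]
  exact (Semiconj.iterate_right (f := ((↑) : NonemptyCompacts X → Set X)) (fun _ => rfl) n) A

lemma uniformContinuous_hyper (hf : UniformContinuous f) : UniformContinuous (hyper f) :=
  hf.nonemptyCompacts_map

lemma NonemptyCompacts.infDist_le_dist {A B : NonemptyCompacts X} {a : X} (ha : a ∈ A) :
    infDist a B ≤ dist A B :=
  infDist_le_hausdorffDist_of_mem ha (hausdorffEDist_ne_top_of_nonempty_of_bounded A.nonempty
    B.nonempty A.isCompact.isBounded B.isCompact.isBounded)

lemma NonemptyCompacts.exists_dist_lt_of_dist_lt {A B : NonemptyCompacts X} {b : X}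
    (hb : b ∈ (B : Set X)) {r : ℝ} (h : dist A B < r) : ∃ a ∈ (A : Set X), dist a b < r :=
  exists_dist_lt_of_hausdorffDist_lt' hb h (hausdorffEDist_ne_top_of_nonempty_of_bounded
    A.nonempty B.nonempty A.isCompact.isBounded B.isCompact.isBounded)

variable {f} {A B : NonemptyCompacts X}

lemma subset_of_hyper_iterate_dvd_dist_lt (hper : ∀ a ∈ (A : Set X), ∃ n > 0, f^[n] a = a)
    (h : ∀ p > 0, ∀ ε > (0 : ℝ), ∃ n, p ∣ n ∧ dist ((hyper f)^[n] A) B < ε) :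
    (A : Set X) ⊆ B := by
  intro a ha
  obtain ⟨p, hp, hpa⟩ := hper a ha
  rw [B.isCompact.isClosed.mem_iff_infDist_zero B.nonempty]
  refine le_antisymm (le_of_forall_pos_lt_add fun ε hε => ?_) infDist_nonneg
  obtain ⟨_, ⟨k, rfl⟩, hk⟩ := h p hp ε hε
  have hmem : a ∈ ((hyper f)^[p * k] A : Set X) := by
    rw [coe_hyper_iterate]
    exact ⟨a, ha, by rw [iterate_mul, iterate_fixed hpa]⟩
  simpa using (NonemptyCompacts.infDist_le_dist hmem).trans_lt hk

lemma mem_of_hyper_iterate_dvd_dist_lt (hAB : (A : Set X) ⊆ B)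
    (h : ∀ p > 0, ∀ ε > (0 : ℝ), ∃ n, p ∣ n ∧ (hyper f)^[n] B = B ∧ dist ((hyper f)^[n] A) B < ε)
    {x : X} (hx : x ∈ (B : Set X)) {q : ℕ} (hq : 0 < q) {r : ℝ} (hr : 0 < r)
    (hfix : ∀ y ∈ (B : Set X), dist y x < r → f^[q] y = y) : x ∈ A := by
  show x ∈ (A : Set X)
  rw [← A.isCompact.isClosed.closure_eq, Metric.mem_closure_iff]
  intro ε hε
  obtain ⟨_, ⟨k, rfl⟩, hB, hA⟩ := h q hq (min ε r) (lt_min hε hr)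
  obtain ⟨y, hy, hyx⟩ := NonemptyCompacts.exists_dist_lt_of_dist_lt hx hA
  rw [coe_hyper_iterate] at hy
  obtain ⟨a, ha, rfl⟩ := hy
  have hyB : f^[q * k] a ∈ (B : Set X) := by
    rw [← hB, coe_hyper_iterate]
    exact mem_image_of_mem _ (hAB ha)
  have hqy := hfix _ hyB (hyx.trans_le (min_le_right _ _))
  have hfa : f^[q * k] a = a :=
    f.injective.iterate (q * k) ((congrFun (iterate_mul f q k) _).trans (iterate_fixed hqy k))
  rw [hfa, dist_comm] at hyx
  exact ⟨a, ha, hyx.trans_le (min_le_left _ _)⟩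

lemma superset_of_hyper_iterate_dvd_dist_lt (hper : ∀ b ∈ (B : Set X), ∃ n > 0, f^[n] b = b)
    (hAB : (A : Set X) ⊆ B)
    (h : ∀ p > 0, ∀ ε > (0 : ℝ), ∃ n, p ∣ n ∧ (hyper f)^[n] B = B ∧ dist ((hyper f)^[n] A) B < ε) :
    (B : Set X) ⊆ A :=
  (B.isCompact.subset_closure_setOf_locally_periodic f.continuous hper).trans <|
    closure_minimal (fun _ ⟨hx, _, hq, _, hr, hfix⟩ =>
      mem_of_hyper_iterate_dvd_dist_lt hAB h hx hq hr hfix) A.isCompact.isClosed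

end Hyperspace

theorem stmt14 {X : Type*} [MetricSpace X] [CompactSpace X]
    (f : X ≃ₜ X) (hper : ∀ x : X, ∃ n > 0, (⇑f)^[n] x = x)
    (A B : NonemptyCompacts X) (N : ℕ) (hN : 0 < N)
    (hBper : (hyper f)^[N] B = B) (hprox : Proximal (hyper f) A B) :
    A = B := by
  have hret : ∀ p > 0, ∀ ε > (0 : ℝ),
      ∃ n, p ∣ n ∧ (hyper f)^[n] B = B ∧ dist ((hyper f)^[n] A) B < ε := by
    intro p hp ε hε
    have hB : (hyper f)^[p * N] B = B := by rw [mul_comm, iterate_mul, iterate_fixed hBper]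
    obtain ⟨n, hn⟩ := hprox.exists_dist_iterate_mul_lt
      (uniformContinuous_hyper f (CompactSpace.uniformContinuous_of_continuous f.continuous))
      (Nat.mul_pos hp hN) hB hε
    exact ⟨p * N * n, dvd_mul_of_dvd_left (dvd_mul_right p N) n,
      by rw [iterate_mul, iterate_fixed hB], hn⟩
  have hAB : (A : Set X) ⊆ B := subset_of_hyper_iterate_dvd_dist_lt (fun a _ => hper a)
    fun p hp ε hε => (hret p hp ε hε).imp fun _ h => ⟨h.1, h.2.2⟩
  exact NonemptyCompacts.ext
    (hAB.antisymm (superset_of_hyper_iterate_dvd_dist_lt (fun b _ => hper b) hAB hret))
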